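/- There exist a time scale T = [0,1] ∪ [2,3] and an rd-continuous function u : T → ℝ (u(1) = 1, u = 0 elsewhere) whose restriction to [0,1] is not rd-continuous on the time scale [0,1], since it fails to be continuous at the right-dense point 1. -/
import Mathlib


open Set Filter

open Classical in
/-- Forward jump operator of a time scale. -/
noncomputable def tsSigma (T : Set ℝ) (t : ℝ) : ℝ :=
  if ({s | s ∈ T ∧ t < s}).Nonempty then sInf {s | s ∈ T ∧ t < s} else sSup T

open Classical in
/-- Backward jump operator of a time scale. -/
noncomputable def tsRho (T : Set ℝ) (t : ℝ) : ℝ :=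
  if ({s | s ∈ T ∧ s < t}).Nonempty then sSup {s | s ∈ T ∧ s < t} else sInf T

/-- `T^κ` : `T` minus a left-scattered maximum, if any. -/
def tsKappa (T : Set ℝ) : Set ℝ :=
  T \ {t | IsGreatest T t ∧ tsRho T t < t}

/-- `u` is Δ-differentiable at `t` with Δ-derivative `L`. -/
def IsDeltaDerivAt {E : Type*} [NormedAddCommGroup E] [NormedSpace ℝ E]
    (T : Set ℝ) (u : ℝ → E) (t : ℝ) (L : E) : Prop :=
  ∀ ε > (0:ℝ), ∃ δ > (0:ℝ), ∀ s ∈ T, |s - t| < δ →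
    ‖u (tsSigma T t) - u s - (tsSigma T t - s) • L‖ ≤ ε * |tsSigma T t - s|

/-- rd-continuity of `u` on the time scale `T`. -/
def RdContinuousOn {E : Type*} [NormedAddCommGroup E]
    (T : Set ℝ) (u : ℝ → E) : Prop :=
  (∀ t ∈ T, tsSigma T t = t → ContinuousWithinAt u T t) ∧
  (∀ t ∈ T, tsRho T t = t → ∃ L : E, Tendsto u (nhdsWithin t (T ∩ Iio t)) (nhds L))

/-- The time scale `[0,1] ∪ [2,3]`. -/
noncomputable def T11 : Set ℝ := Set.Icc 0 1 ∪ Set.Icc 2 3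

open Classical in
/-- The function with `u(1) = 1` and `u = 0` elsewhere. -/
noncomputable def u11 : ℝ → ℝ := fun t => if t = 1 then 1 else 0

lemma cont_at_ne_one {S : Set ℝ} {t : ℝ} (h : t ≠ 1) :
    ContinuousWithinAt u11 S t := by
  have hev : u11 =ᶠ[nhds t] fun _ => (0:ℝ) := by
    filter_upwards [isOpen_ne.mem_nhds h] with x hx
    exact if_neg hx
  exact (continuousWithinAt_const (b := (0:ℝ))).congr_of_eventuallyEq
    (hev.filter_mono nhdsWithin_le_nhds) (if_neg h)

lemma left_limit (S : Set ℝ) (t : ℝ) :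
    Tendsto u11 (nhdsWithin t (S ∩ Iio t)) (nhds 0) := by
  have hev : ∀ᶠ x in nhdsWithin t (S ∩ Iio t), u11 x = 0 := by
    rcases eq_or_ne t 1 with rfl | ht
    · filter_upwards [self_mem_nhdsWithin] with x hx
      exact if_neg (ne_of_lt hx.2)
    · filter_upwards [nhdsWithin_le_nhds (isOpen_ne.mem_nhds ht)] with x hx
      exact if_neg hx
  exact (tendsto_congr' hev).mpr tendsto_const_nhds

lemma sigma_Icc : tsSigma (Set.Icc (0:ℝ) 1) 1 = 1 := by
  unfold tsSigma
  rw [if_neg, csSup_Icc (by norm_num : (0:ℝ) ≤ 1)]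
  rintro ⟨s, ⟨_, hs1⟩, hlt⟩
  exact absurd hs1 (not_le.mpr hlt)

lemma sigma_T11_one : tsSigma T11 1 = 2 := by
  unfold tsSigma
  rw [if_pos ⟨2, Or.inr ⟨le_refl 2, by norm_num⟩, by norm_num⟩]
  apply IsLeast.csInf_eq
  refine ⟨⟨Or.inr ⟨le_refl 2, by norm_num⟩, by norm_num⟩, ?_⟩
  rintro s ⟨hs, h1⟩
  rcases hs with ⟨_, h⟩ | ⟨h, _⟩
  · linarith
  · exact h

lemma not_cont : ¬ ContinuousWithinAt u11 (Set.Icc (0:ℝ) 1) 1 := by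
  intro h
  have h0 : Tendsto u11 (nhdsWithin 1 (Icc (0:ℝ) 1 ∩ Iio 1)) (nhds 0) := left_limit _ 1
  have h1 : Tendsto u11 (nhdsWithin 1 (Icc (0:ℝ) 1 ∩ Iio 1)) (nhds (u11 1)) :=
    h.mono_left (nhdsWithin_mono _ inter_subset_left)
  have hset : Icc (0:ℝ) 1 ∩ Iio 1 = Ico (0:ℝ) 1 := by
    ext x
    simp only [mem_inter_iff, mem_Icc, mem_Iio, mem_Ico]
    exact ⟨fun ⟨⟨h0, _⟩, h2⟩ => ⟨h0, h2⟩, fun ⟨h0, h2⟩ => ⟨⟨h0, le_of_lt h2⟩, h2⟩⟩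
  have hne : (nhdsWithin 1 (Icc (0:ℝ) 1 ∩ Iio 1)).NeBot := by
    rw [hset, ← mem_closure_iff_nhdsWithin_neBot,
      closure_Ico (by norm_num : (0:ℝ) ≠ 1)]
    exact ⟨by norm_num, le_refl 1⟩
  have := tendsto_nhds_unique h0 h1
  rw [show u11 1 = 1 from if_pos rfl] at this
  norm_num at this

/-- `u11` is rd-continuous on `T11 = [0,1] ∪ [2,3]`, but its
restriction to `[0,1]` is not rd-continuous on the time scale `[0,1]`: the point
`1` is right-dense in `[0,1]` and `u11` fails to be continuous there. -/
theorem restriction_not_rdContinuous :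
    RdContinuousOn T11 u11 ∧
    ¬ RdContinuousOn (Set.Icc (0:ℝ) 1) u11 ∧
    tsSigma (Set.Icc (0:ℝ) 1) 1 = 1 ∧
    ¬ ContinuousWithinAt u11 (Set.Icc (0:ℝ) 1) 1 := by
  refine ⟨⟨?_, fun t _ _ => ⟨0, left_limit T11 t⟩⟩, ?_, sigma_Icc, not_cont⟩
  · intro t ht hσ
    rcases eq_or_ne t 1 with rfl | h
    · rw [sigma_T11_one] at hσ; norm_num at hσ
    · exact cont_at_ne_one h
  · rintro ⟨h1, _⟩
    exact not_cont (h1 1 ⟨by norm_num, le_refl 1⟩ sigma_Icc)
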